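/- Let d ≥ 2 and let ρ > 0 with ρ ≠ 1. Define ψ(ξ') = 1 − √(1 − |ξ'|²) for ξ' ∈ ℝ^{d−1} with |ξ'| < 1, and b_δ(τ, ξ') = ρ²δ / ((τ(τ + 2ψ(ξ') − 2) + 1 − ρ)² + (ρδ)²) · |ξ'|² / (τ + ψ(ξ') − 1)². Then there exists ε∘ > 0 (depending on ρ) such that for every n ∈ ℕ there is a constant C_n > 0 with the following property: for all δ ∈ (0,1], all τ ∈ ℝ with |τ| ≤ 2ε∘, and all ξ' ∈ ℝ^{d−1} with |ξ'| ≤ 1/10, ‖D^n_{ξ'} b_δ(τ, ξ')‖ ≤ C_n · δ / ((τ(τ + 2ψ(ξ') − 2) + 1 − ρ)² + (ρδ)²) ≤ C_n' δ for some constant C_n' depending only on n, d, ρ. -/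

import Mathlib

/-!
Write `b_δ(τ, ξ') = δ · G(δ, τ, ξ')`, where `G` is smooth in all three variables wherever
`|ξ'| < 1` and neither denominator vanishes. With `ε∘ = min(|1 − ρ|/12, 1/8)`, for `|τ| ≤ 2ε∘`
and `|ξ'| ≤ 1/10` the term `τ(τ + 2ψ − 2)` has absolute value at most `|1 − ρ|/2`, so the first denominator stays between `(1 − ρ)²/4` and
`9(1 − ρ)²/4 + ρ²` for every `δ ∈ [0, 1]`, `δ = 0` included. Hence `G` is smooth near the compact
set `[0, 1] × [−2ε∘, 2ε∘] × B̄(0, 1/10)`, its `ξ'`-derivatives of order `n` are bounded there by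
some `M`, and `‖D^n b_δ‖ ≤ δ M`; the two bounds on the denominator turn this into both
inequalities.
-/

open Real
open scoped ENNReal

noncomputable section

/-- `ψ(ξ') = 1 − √(1 − |ξ'|²)` on `ℝ^{d−1}`. -/
def psiFn (m : ℕ) (w : EuclideanSpace ℝ (Fin m)) : ℝ := 1 - Real.sqrt (1 - ‖w‖ ^ 2)

/-- `b_δ(τ, ξ') = ρ²δ/((τ(τ+2ψ(ξ')−2)+1−ρ)² + (ρδ)²) · |ξ'|²/(τ+ψ(ξ')−1)²`. -/
def bDelta (m : ℕ) (ρ δ τ : ℝ) (w : EuclideanSpace ℝ (Fin m)) : ℝ :=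
  ρ ^ 2 * δ / ((τ * (τ + 2 * psiFn m w - 2) + 1 - ρ) ^ 2 + (ρ * δ) ^ 2) *
    (‖w‖ ^ 2 / (τ + psiFn m w - 1) ^ 2)

section Slice

variable {𝕜 : Type*} [NontriviallyNormedField 𝕜]
  {E F G : Type*} [NormedAddCommGroup E] [NormedSpace 𝕜 E] [NormedAddCommGroup F]
  [NormedSpace 𝕜 F] [NormedAddCommGroup G] [NormedSpace 𝕜 G]

theorem iteratedFDeriv_comp_prodMk_right {f : E × F → G} {p : E} {v : F} {i : ℕ}
    (hf : ContDiffAt 𝕜 i f (p, v)) :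
    iteratedFDeriv 𝕜 i (fun w => f (p, w)) v =
      (iteratedFDeriv 𝕜 i f (p, v)).compContinuousLinearMap
        fun _ => ContinuousLinearMap.inr 𝕜 E F := by
  obtain ⟨u, hu, hxu, hfu⟩ := hf.contDiffWithinAt.contDiffOn' le_rfl (by simp)
  rw [Set.insert_eq_of_mem (Set.mem_univ _), Set.univ_inter] at hfu
  set a : E × F := (p, 0)
  set s : Set (E × F) := (a + ·) ⁻¹' u
  have hs : IsOpen s := hu.preimage (continuous_const.add continuous_id)
  have hs' : IsOpen (ContinuousLinearMap.inr 𝕜 E F ⁻¹' s) :=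
    hs.preimage (ContinuousLinearMap.continuous _)
  have hvs : ContinuousLinearMap.inr 𝕜 E F v ∈ s := by simpa [s, a] using hxu
  have hfs : ContDiffOn 𝕜 i (fun y => f (a + y)) s :=
    hfu.comp (contDiff_const.add contDiff_id).contDiffOn fun _ hy => hy
  have hslice : (fun y => f (a + y)) ∘ ContinuousLinearMap.inr 𝕜 E F = fun w => f (p, w) := by
    funext w; simp [a]
  have key := (ContinuousLinearMap.inr 𝕜 E F).iteratedFDerivWithin_comp_right hfs
    hs.uniqueDiffOn hs'.uniqueDiffOn hvs le_rfl
  rw [hslice, iteratedFDerivWithin_of_isOpen _ hs' hvs, iteratedFDerivWithin_of_isOpen _ hs hvs,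
    iteratedFDeriv_comp_add_left] at key
  simpa [a] using key

theorem norm_iteratedFDeriv_comp_prodMk_right_le {f : E × F → G} {p : E} {v : F} {i : ℕ}
    (hf : ContDiffAt 𝕜 i f (p, v)) :
    ‖iteratedFDeriv 𝕜 i (fun w => f (p, w)) v‖ ≤ ‖iteratedFDeriv 𝕜 i f (p, v)‖ := by
  rw [iteratedFDeriv_comp_prodMk_right hf]
  calc _ ≤ ‖iteratedFDeriv 𝕜 i f (p, v)‖ * ∏ _ : Fin i, ‖ContinuousLinearMap.inr 𝕜 E F‖ :=
        ContinuousMultilinearMap.norm_compContinuousLinearMap_le _ _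
    _ ≤ ‖iteratedFDeriv 𝕜 i f (p, v)‖ * 1 := by
        gcongr
        exact Finset.prod_le_one (fun _ _ => norm_nonneg _)
          fun _ _ => ContinuousLinearMap.norm_inr_le_one 𝕜 E F
    _ = _ := mul_one _

theorem IsCompact.exists_bound_norm_iteratedFDeriv_comp_prodMk_right {f : E × F → G}
    {K : Set (E × F)} (hK : IsCompact K) {i : ℕ} (hf : ∀ x ∈ K, ContDiffAt 𝕜 i f x) :
    ∃ M, ∀ x ∈ K, ‖iteratedFDeriv 𝕜 i (fun w => f (x.1, w)) x.2‖ ≤ M := by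
  have hcont : ContinuousOn (iteratedFDeriv 𝕜 i f) K := fun x hx =>
    ((hf x hx).continuousAt_iteratedFDeriv le_rfl).continuousWithinAt
  obtain ⟨M, hM⟩ := hK.exists_bound_of_continuousOn hcont
  exact ⟨M, fun x hx => (norm_iteratedFDeriv_comp_prodMk_right_le (hf x hx)).trans (hM x hx)⟩

end Slice

theorem abs_add_bounds_of_abs_le_half {a q : ℝ} (h : |q| ≤ |a| / 2) :
    |a| / 2 ≤ |a + q| ∧ |a + q| ≤ 3 * |a| / 2 := by
  have h₁ := abs_add_le a q
  have h₂ := abs_sub_abs_le_abs_sub a (-q)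
  rw [abs_neg, sub_neg_eq_add] at h₂
  constructor <;> linarith

section Symbol

variable {m : ℕ}

theorem psiFn_nonneg (w : EuclideanSpace ℝ (Fin m)) : 0 ≤ psiFn m w := by
  have : √(1 - ‖w‖ ^ 2) ≤ 1 := Real.sqrt_le_one.mpr (by nlinarith [norm_nonneg w])
  unfold psiFn; linarith

theorem psiFn_le_sq_norm {w : EuclideanSpace ℝ (Fin m)} (hw : ‖w‖ ≤ 1) :
    psiFn m w ≤ ‖w‖ ^ 2 := by
  have h0 : 0 ≤ 1 - ‖w‖ ^ 2 := by nlinarith [norm_nonneg w]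
  have : 1 - ‖w‖ ^ 2 ≤ √(1 - ‖w‖ ^ 2) := by
    rw [Real.le_sqrt h0 h0]; nlinarith
  unfold psiFn; linarith

theorem contDiffAt_psiFn {n : WithTop ℕ∞} {w : EuclideanSpace ℝ (Fin m)} (hw : ‖w‖ < 1) :
    ContDiffAt ℝ n (psiFn m) w := by
  have h : 1 - ‖w‖ ^ 2 ≠ 0 := by nlinarith [norm_nonneg w]
  exact contDiffAt_const.sub ((contDiffAt_const.sub (contDiff_norm_sq ℝ).contDiffAt).sqrt h)

def bDenom (m : ℕ) (ρ δ τ : ℝ) (w : EuclideanSpace ℝ (Fin m)) : ℝ :=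
  (τ * (τ + 2 * psiFn m w - 2) + 1 - ρ) ^ 2 + (ρ * δ) ^ 2

def bReduced (m : ℕ) (ρ : ℝ) (x : (ℝ × ℝ) × EuclideanSpace ℝ (Fin m)) : ℝ :=
  ρ ^ 2 / bDenom m ρ x.1.1 x.1.2 x.2 * (‖x.2‖ ^ 2 / (x.1.2 + psiFn m x.2 - 1) ^ 2)

theorem bDelta_eq_smul_bReduced (ρ δ τ : ℝ) :
    bDelta m ρ δ τ = δ • fun w => bReduced m ρ ((δ, τ), w) := by
  funext w
  simp only [bDelta, bReduced, bDenom, Pi.smul_apply, smul_eq_mul]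
  ring

theorem contDiffAt_bReduced {n : WithTop ℕ∞} {ρ δ τ : ℝ} {w : EuclideanSpace ℝ (Fin m)}
    (hw : ‖w‖ < 1) (hD : bDenom m ρ δ τ w ≠ 0) (hτ : τ + psiFn m w - 1 ≠ 0) :
    ContDiffAt ℝ n (bReduced m ρ) ((δ, τ), w) := by
  have hψ : ContDiffAt ℝ n (fun x : (ℝ × ℝ) × EuclideanSpace ℝ (Fin m) => psiFn m x.2)
      ((δ, τ), w) :=
    ContDiffAt.comp (g := psiFn m) ((δ, τ), w) (contDiffAt_psiFn hw) contDiffAt_snd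
  have hs : ContDiffAt ℝ n (fun x : (ℝ × ℝ) × EuclideanSpace ℝ (Fin m) => x.1.1) ((δ, τ), w) :=
    contDiffAt_fst.fst
  have ht : ContDiffAt ℝ n (fun x : (ℝ × ℝ) × EuclideanSpace ℝ (Fin m) => x.1.2) ((δ, τ), w) :=
    contDiffAt_fst.snd
  have hD' : ContDiffAt ℝ n (fun x : (ℝ × ℝ) × EuclideanSpace ℝ (Fin m) =>
      bDenom m ρ x.1.1 x.1.2 x.2) ((δ, τ), w) := by
    unfold bDenom; fun_prop
  exact (contDiffAt_const.div hD' hD).mul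
    (((contDiff_norm_sq ℝ).comp contDiff_snd).contDiffAt.div (by fun_prop) (pow_ne_zero 2 hτ))

theorem norm_iteratedFDeriv_bDelta {n : ℕ} {ρ δ τ : ℝ} {w : EuclideanSpace ℝ (Fin m)}
    (hδ : 0 ≤ δ) (h : ContDiffAt ℝ n (bReduced m ρ) ((δ, τ), w)) :
    ‖iteratedFDeriv ℝ n (bDelta m ρ δ τ) w‖ =
      δ * ‖iteratedFDeriv ℝ n (fun v => bReduced m ρ ((δ, τ), v)) w‖ := by
  have hslice : ContDiffAt ℝ n (fun v => bReduced m ρ ((δ, τ), v)) w :=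
    h.comp w (contDiff_prodMk_right (δ, τ)).contDiffAt
  rw [bDelta_eq_smul_bReduced, iteratedFDeriv_const_smul_apply hslice, norm_smul,
    Real.norm_of_nonneg hδ]

theorem bDenom_bounds {ρ δ τ : ℝ} {w : EuclideanSpace ℝ (Fin m)} (hδ : δ ∈ Set.Icc (0 : ℝ) 1)
    (hτ : |τ| ≤ 1 / 4) (hτρ : 6 * |τ| ≤ |1 - ρ|) (hw : ‖w‖ ≤ 1) :
    (1 - ρ) ^ 2 / 4 ≤ bDenom m ρ δ τ w ∧ bDenom m ρ δ τ w ≤ 9 * (1 - ρ) ^ 2 / 4 + ρ ^ 2 := by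
  set ψ := psiFn m w
  have hψ1 : ψ ≤ 1 := (psiFn_le_sq_norm hw).trans (by nlinarith [norm_nonneg w])
  have hq : |τ * (τ + 2 * ψ - 2)| ≤ |1 - ρ| / 2 := by
    have : |τ + 2 * ψ - 2| ≤ 3 := abs_le.mpr
      (by constructor <;> linarith [(abs_le.mp hτ).1, (abs_le.mp hτ).2, psiFn_nonneg w])
    rw [abs_mul]
    nlinarith [abs_nonneg τ]
  obtain ⟨hlow, hup⟩ := abs_add_bounds_of_abs_le_half hq
  rw [show 1 - ρ + τ * (τ + 2 * ψ - 2) = τ * (τ + 2 * ψ - 2) + 1 - ρ by ring] at hlow hup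
  have hlow' := sq_le_sq' (by linarith [abs_nonneg (1 - ρ)]) hlow
  have hup' := sq_le_sq' (by linarith [abs_nonneg (τ * (τ + 2 * ψ - 2) + 1 - ρ)]) hup
  rw [sq_abs, div_pow, sq_abs] at hlow'
  rw [sq_abs, mul_div_assoc, mul_pow, div_pow, sq_abs] at hup'
  have hρδ : (ρ * δ) ^ 2 ≤ ρ ^ 2 := by
    rw [mul_pow]
    exact mul_le_of_le_one_right (sq_nonneg ρ) (pow_le_one₀ hδ.1 hδ.2)
  unfold bDenom
  constructor <;> nlinarith [sq_nonneg (ρ * δ)]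

theorem contDiffAt_bReduced_of_abs_le {n : WithTop ℕ∞} {ρ δ τ : ℝ}
    {w : EuclideanSpace ℝ (Fin m)} (hρ1 : ρ ≠ 1) (hδ : δ ∈ Set.Icc (0 : ℝ) 1)
    (hτ : |τ| ≤ 1 / 4) (hτρ : 6 * |τ| ≤ |1 - ρ|) (hw : ‖w‖ ≤ 1 / 2) :
    ContDiffAt ℝ n (bReduced m ρ) ((δ, τ), w) := by
  have hρ : 0 < (1 - ρ) ^ 2 / 4 := by have := sub_ne_zero.mpr hρ1.symm; positivity
  have hψ : psiFn m w ≤ 1 / 4 :=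
    (psiFn_le_sq_norm (by linarith)).trans (by nlinarith [norm_nonneg w])
  refine contDiffAt_bReduced (by linarith) ?_ ?_
  · exact ((bDenom_bounds hδ hτ hτρ (by linarith)).1.trans_lt' hρ).ne'
  · linarith [(abs_le.mp hτ).2]

open Set in
theorem exists_bound_norm_iteratedFDeriv_bDelta {ρ : ℝ} (hρ1 : ρ ≠ 1) (n : ℕ) :
    ∃ M > 0, ∀ δ ∈ Icc (0 : ℝ) 1, ∀ τ : ℝ, |τ| ≤ 1 / 4 → 6 * |τ| ≤ |1 - ρ| →
      ∀ w : EuclideanSpace ℝ (Fin m), ‖w‖ ≤ 1 / 10 →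
        ‖iteratedFDeriv ℝ n (bDelta m ρ δ τ) w‖ ≤ δ * M := by
  set r := min (1 / 4) (|1 - ρ| / 6)
  have hr : ∀ τ : ℝ, |τ| ≤ r ↔ |τ| ≤ 1 / 4 ∧ 6 * |τ| ≤ |1 - ρ| := fun τ => by
    rw [le_min_iff, le_div_iff₀' (by norm_num : (0 : ℝ) < 6)]
  set K : Set ((ℝ × ℝ) × EuclideanSpace ℝ (Fin m)) :=
    (Icc 0 1 ×ˢ Icc (-r) r) ×ˢ Metric.closedBall 0 (1 / 10)
  have hreg : ∀ x ∈ K, ContDiffAt ℝ n (bReduced m ρ) x := by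
    rintro ⟨⟨s, τ⟩, w⟩ ⟨⟨hs, hτ⟩, hw⟩
    obtain ⟨hτ₁, hτ₂⟩ := (hr τ).mp (abs_le.mpr hτ)
    exact contDiffAt_bReduced_of_abs_le hρ1 hs hτ₁ hτ₂
      (by linarith [mem_closedBall_zero_iff.mp hw])
  have hK : IsCompact K := (isCompact_Icc.prod isCompact_Icc).prod (isCompact_closedBall _ _)
  obtain ⟨M, hM⟩ := hK.exists_bound_norm_iteratedFDeriv_comp_prodMk_right hreg
  refine ⟨|M| + 1, by positivity, fun δ hδ τ hτ hτρ w hw => ?_⟩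
  have hx : ((δ, τ), w) ∈ K :=
    ⟨⟨hδ, abs_le.mp ((hr τ).mpr ⟨hτ, hτρ⟩)⟩, mem_closedBall_zero_iff.mpr hw⟩
  rw [norm_iteratedFDeriv_bDelta hδ.1 (hreg _ hx)]
  exact mul_le_mul_of_nonneg_left (by linarith [hM _ hx, le_abs_self M]) hδ.1

end Symbol

theorem bDelta_deriv_bounds_general (d : ℕ) (ρ : ℝ) (hρ1 : ρ ≠ 1) :
    ∃ ε : ℝ, 0 < ε ∧ ∀ n : ℕ, ∃ C C' : ℝ, 0 < C ∧ 0 < C' ∧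
      ∀ δ : ℝ, δ ∈ Set.Ioc (0 : ℝ) 1 → ∀ τ : ℝ, |τ| ≤ 2 * ε →
        ∀ w : EuclideanSpace ℝ (Fin (d - 1)), ‖w‖ ≤ 1 / 10 →
          ‖iteratedFDeriv ℝ n (bDelta (d - 1) ρ δ τ) w‖ ≤
              C * (δ / ((τ * (τ + 2 * psiFn (d - 1) w - 2) + 1 - ρ) ^ 2 + (ρ * δ) ^ 2)) ∧
            C * (δ / ((τ * (τ + 2 * psiFn (d - 1) w - 2) + 1 - ρ) ^ 2 + (ρ * δ) ^ 2)) ≤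
              C' * δ := by
  have hρ : (1 : ℝ) - ρ ≠ 0 := sub_ne_zero.mpr hρ1.symm
  refine ⟨min (|1 - ρ| / 12) (1 / 8), lt_min (by positivity) (by norm_num), fun n => ?_⟩
  obtain ⟨M, hM, hbound⟩ := exists_bound_norm_iteratedFDeriv_bDelta (m := d - 1) hρ1 n
  set C := M * (9 * (1 - ρ) ^ 2 / 4 + ρ ^ 2)
  refine ⟨C, 4 * C / (1 - ρ) ^ 2, by positivity, by positivity, fun δ hδ τ hτ w hw => ?_⟩
  have hτ₁ : |τ| ≤ 1 / 4 := by linarith [min_le_right (|1 - ρ| / 12) (1 / 8)]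
  have hτ₂ : 6 * |τ| ≤ |1 - ρ| := by linarith [min_le_left (|1 - ρ| / 12) (1 / 8)]
  obtain ⟨hlow, hup⟩ := bDenom_bounds (w := w) (Set.Ioc_subset_Icc_self hδ) hτ₁ hτ₂ (by linarith)
  have hD : 0 < bDenom (d - 1) ρ δ τ w := hlow.trans_lt' (by positivity)
  change _ ≤ C * (δ / bDenom (d - 1) ρ δ τ w) ∧ C * (δ / bDenom (d - 1) ρ δ τ w) ≤ _
  have hδ₀ : 0 ≤ δ := hδ.1.le
  constructor
  · calc ‖iteratedFDeriv ℝ n (bDelta (d - 1) ρ δ τ) w‖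
        ≤ δ * M := hbound δ (Set.Ioc_subset_Icc_self hδ) τ hτ₁ hτ₂ w hw
      _ = C * (δ / (9 * (1 - ρ) ^ 2 / 4 + ρ ^ 2)) := by simp only [C]; field_simp
      _ ≤ C * (δ / bDenom (d - 1) ρ δ τ w) := by gcongr
  · calc C * (δ / bDenom (d - 1) ρ δ τ w) ≤ C * (δ / ((1 - ρ) ^ 2 / 4)) := by gcongr
      _ = 4 * C / (1 - ρ) ^ 2 * δ := by field_simp

/-- **Lemma 3.2, bounds for `b_δ`.** Let `d ≥ 2`, `ρ > 0`, `ρ ≠ 1`.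
There is `ε∘ > 0` such that for every `n` there are constants `C_n, C_n' > 0` with:
for all `δ ∈ (0,1]`, `|τ| ≤ 2ε∘` and `|ξ'| ≤ 1/10`,
`‖D^n_{ξ'} b_δ(τ, ξ')‖ ≤ C_n · δ/((τ(τ+2ψ(ξ')−2)+1−ρ)² + (ρδ)²) ≤ C_n' δ`. -/
theorem bDelta_deriv_bounds (d : ℕ) (hd : 2 ≤ d) (ρ : ℝ) (hρ : 0 < ρ) (hρ1 : ρ ≠ 1) :
    ∃ ε : ℝ, 0 < ε ∧ ∀ n : ℕ, ∃ C C' : ℝ, 0 < C ∧ 0 < C' ∧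
      ∀ δ : ℝ, δ ∈ Set.Ioc (0 : ℝ) 1 → ∀ τ : ℝ, |τ| ≤ 2 * ε →
        ∀ w : EuclideanSpace ℝ (Fin (d - 1)), ‖w‖ ≤ 1 / 10 →
          ‖iteratedFDeriv ℝ n (bDelta (d - 1) ρ δ τ) w‖ ≤
              C * (δ / ((τ * (τ + 2 * psiFn (d - 1) w - 2) + 1 - ρ) ^ 2 + (ρ * δ) ^ 2)) ∧
            C * (δ / ((τ * (τ + 2 * psiFn (d - 1) w - 2) + 1 - ρ) ^ 2 + (ρ * δ) ^ 2)) ≤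
              C' * δ :=
  bDelta_deriv_bounds_general d ρ hρ1

end
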